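/- The uniform probability measure ρ_{S,t} on 𝒳^{S,t}, given by ρ_{S,t}(Y) = Z_{S,t} ∏_{i<j}(y_i-y_j)^2 ∏_i w^{S,t}(y_i) with weight w^{S,t}(x) = 1/[x!(t+N-1-x)!(S+N-1-x)!(T-t-S+x)!], is preserved by the stochastic matrix P^{S,t}_{t+}: for all Y ∈ 𝒳^{S,t+1}, ρ_{S,t+1}(Y) = Σ_{X ∈ 𝒳^{S,t}} P^{S,t}_{t+}(X,Y) ρ_{S,t}(X). -/

import Mathlib

open Finset

noncomputable def poch (a : ℝ) (n : ℕ) : ℝ := ∏ k ∈ Finset.range n, (a + k)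

noncomputable def pairProd {N : ℕ} (f : Fin N → ℤ) : ℝ :=
  ∏ p ∈ Finset.univ.filter (fun p : Fin N × Fin N => p.1 < p.2), ((f p.2 - f p.1 : ℤ) : ℝ)

noncomputable def secX (N T S t : ℕ) : Finset ℤ :=
  Finset.Icc (max 0 ((t : ℤ) + S - T)) (min ((t : ℤ) + N - 1) ((S : ℤ) + N - 1))

noncomputable def Xcal (N T S t : ℕ) : Finset (Fin N → ℤ) :=
  (Fintype.piFinset fun _ => secX N T S t).filter
    (fun f => ∀ i j : Fin N, i < j → f i < f j)

noncomputable def Ptp (N T S t : ℕ) (X Y : Fin N → ℤ) : ℝ :=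
  if ∀ i, Y i = X i ∨ Y i = X i + 1 then
    (pairProd Y *
      ∏ i, (if Y i = X i + 1 then (N : ℝ) + S - X i - 1 else (X i : ℝ) + T - t - S)) /
      (poch ((T : ℝ) - t) N * pairProd X)
  else 0

/-- The weight w^{S,t}(x) = 1/[x!(t+N-1-x)!(S+N-1-x)!(T-t-S+x)!]. -/
noncomputable def w (N T S t : ℕ) (x : ℤ) : ℝ :=
  1 / ((Nat.factorial x.toNat : ℝ) * (Nat.factorial ((t : ℤ) + N - 1 - x).toNat : ℝ) *
    (Nat.factorial ((S : ℤ) + N - 1 - x).toNat : ℝ) *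
    (Nat.factorial ((T : ℤ) - t - S + x).toNat : ℝ))

/-- ρ_{S,t}(Y) = Z · ∏_{i<j}(y_i-y_j)² · ∏_i w^{S,t}(y_i), with normalization Z. -/
noncomputable def rho (N T S t : ℕ) (Z : ℝ) (Y : Fin N → ℤ) : ℝ :=
  Z * (pairProd Y) ^ 2 * ∏ i, w N T S t (Y i)


/-!
Both the stochasticity of `Ptp` and the intertwining `ρ_{S,t} P = ρ_{S,t+1}` come from one
determinant identity: for integers `x` and `V(x) = ∏_{i<j} (x_j - x_i)` (`pairProd`),
`∑_{ε ∈ {0,1}^N} V(x + ε) ∏ᵢ (if εᵢ = 1 then β - xᵢ else α + xᵢ) = V(x) ∏_{k<N} (α + β - k)`.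
By multilinearity of the determinant in its rows, the left side is
`det [(α + xᵢ) xᵢ ^ j + (β - xᵢ) (xᵢ + 1) ^ j]`, whose `j`-th column is a polynomial of degree
`≤ j` in `xᵢ` with `j`-th coefficient `α + β - j`. With `α = T - t - S`, `β = N + S - 1` this gives
`∑_Y P(X, Y) = 1`. A factorial identity turns `(step weight) · w^{S,t}(x)` into
`(reverse step weight) · w^{S,t+1}(y)`, after which the identity with `α = 1`, `β = t + N - 1`
gives `∑_X P(X, Y) ρ_{S,t}(X) = c · ρ_{S,t+1}(Y)`; summing over `Y` shows that `c Z_{S,t}` is the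
normalization constant `Z_{S,t+1}`. Configurations leaving the box contribute nothing: either two
coordinates collide, so `V = 0`, or a boundary weight vanishes.
-/

namespace Polynomial

variable {R : Type*} [CommRing R]

noncomputable def stepPoly (α β : R) (j : ℕ) : R[X] :=
  (C α + X) * X ^ j + (C β - X) * (X + 1) ^ j

lemma eval_stepPoly (α β x : R) (j : ℕ) :
    (stepPoly α β j).eval x = (α + x) * x ^ j + (β - x) * (x + 1) ^ j := by
  simp [stepPoly]

lemma coeff_stepPoly_succ (α β : R) (j m : ℕ) :
    (stepPoly α β j).coeff (m + 1) =
      (if m + 1 = j then α else 0) + (if m = j then 1 else 0) + β * j.choose (m + 1) -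
        j.choose m := by
  simp only [stepPoly, add_mul, sub_mul, coeff_add, coeff_sub, coeff_C_mul, coeff_X_mul,
    coeff_X_pow, coeff_X_add_one_pow]
  split_ifs <;> ring

lemma coeff_stepPoly_of_lt (α β : R) {j k : ℕ} (h : j < k) : (stepPoly α β j).coeff k = 0 := by
  obtain ⟨m, rfl⟩ : ∃ m, k = m + 1 := ⟨k - 1, by omega⟩
  rw [coeff_stepPoly_succ, Nat.choose_eq_zero_of_lt h]
  rcases (Nat.lt_succ_iff.mp h).eq_or_lt with rfl | hm
  · simp
  · rw [if_neg (by omega), if_neg hm.ne', Nat.choose_eq_zero_of_lt hm]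
    simp

lemma natDegree_stepPoly_le (α β : R) (j : ℕ) : (stepPoly α β j).natDegree ≤ j :=
  natDegree_le_iff_coeff_eq_zero.mpr fun _ h => coeff_stepPoly_of_lt α β h

lemma coeff_stepPoly_self (α β : R) (j : ℕ) : (stepPoly α β j).coeff j = α + β - j := by
  cases j with
  | zero => simp [stepPoly]
  | succ m =>
    rw [coeff_stepPoly_succ]
    simp

end Polynomial

namespace Matrix

open Polynomial

variable {R : Type*} [CommRing R] {n : ℕ}

lemma det_eval_stepPoly (α β : R) (x : Fin n → R) :
    (of fun i j : Fin n => (stepPoly α β j).eval (x i)).det =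
      (vandermonde x).det * ∏ k ∈ range n, (α + β - k) := by
  have htri : (of fun i j : Fin n => (stepPoly α β j).coeff i).IsUpperTriangular :=
    fun _ _ hij => coeff_stepPoly_of_lt α β hij
  rw [eval_matrixOfPolynomials_eq_vandermonde_mul_matrixOfPolynomials x
      (fun j => stepPoly α β j) (fun j => natDegree_stepPoly_le α β j),
    det_mul, det_of_isUpperTriangular htri, ← Fin.prod_univ_eq_prod_range (α + β - ·)]
  simp [coeff_stepPoly_self]

lemma sum_det_vandermonde_mul_prod {ι : Type*} (A : Fin n → Finset ι) (φ : ι → R)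
    (g : Fin n → ι → R) :
    ∑ z ∈ Fintype.piFinset A, (vandermonde fun i => φ (z i)).det * ∏ i, g i (z i) =
      (of fun i j : Fin n => ∑ a ∈ A i, g i a * φ a ^ (j : ℕ)).det := by
  have h := (detRowAlternating (n := Fin n) (R := R)).map_sum_finset
    (fun i a j => g i a * φ a ^ (j : ℕ)) A
  simp only [Finset.sum_fn] at h
  refine (h.trans (Finset.sum_congr rfl fun z _ => ?_)).symm
  rw [mul_comm, ← det_mul_column]
  rfl

end Matrix

lemma poch_eq_prod_range_reflect (a : ℝ) (n : ℕ) :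
    poch a n = ∏ k ∈ range n, (a + n - 1 - k) := by
  rw [poch, ← prod_range_reflect]
  refine prod_congr rfl fun k hk => ?_
  rw [mem_range] at hk
  rw [Nat.cast_sub (by omega), Nat.cast_sub (by omega)]
  push_cast
  ring

lemma poch_pos {a : ℝ} (ha : 0 < a) (n : ℕ) : 0 < poch a n :=
  prod_pos fun k _ => by positivity

section pairProd

variable {N : ℕ}

lemma pairProd_eq_det_vandermonde (f : Fin N → ℤ) :
    pairProd f = (Matrix.vandermonde fun i => (f i : ℝ)).det := by
  rw [Matrix.det_vandermonde, pairProd, prod_sigma']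
  refine (prod_nbij' (fun p => (p.1, p.2)) (fun p => ⟨p.1, p.2⟩) ?_ ?_ ?_ ?_ ?_).symm <;>
    simp

lemma pairProd_sub_const (f : Fin N → ℤ) (c : ℤ) : pairProd (fun i => f i - c) = pairProd f :=
  prod_congr rfl fun _ _ => by simp

lemma pairProd_pos {f : Fin N → ℤ} (hf : StrictMono f) : 0 < pairProd f :=
  prod_pos fun _ hp => by exact_mod_cast sub_pos.mpr (hf (mem_filter.mp hp).2)

lemma pairProd_eq_zero_of_not_injective {f : Fin N → ℤ} (hf : ¬ Function.Injective f) :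
    pairProd f = 0 := by
  obtain ⟨i, j, hfij, hij⟩ : ∃ i j, f i = f j ∧ i ≠ j := by
    simpa [Function.Injective] using hf
  rcases hij.lt_or_gt with h | h
  · exact prod_eq_zero (mem_filter.mpr ⟨mem_univ (i, j), h⟩) (by simp [hfij])
  · exact prod_eq_zero (mem_filter.mpr ⟨mem_univ (j, i), h⟩) (by simp [hfij])

def steps (x : Fin N → ℤ) : Finset (Fin N → ℤ) :=
  Fintype.piFinset fun i => {x i, x i + 1}

lemma mem_steps {x z : Fin N → ℤ} : z ∈ steps x ↔ ∀ i, z i = x i ∨ z i = x i + 1 := by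
  simp [steps]

lemma monotone_of_mem_steps {x z : Fin N → ℤ} (hx : StrictMono x) (hz : z ∈ steps x) :
    Monotone z := by
  refine monotone_iff_forall_lt.mpr fun i j hij => ?_
  have := hx hij
  rcases mem_steps.mp hz i with h | h <;> rcases mem_steps.mp hz j with h' | h' <;> omega

theorem sum_steps_pairProd_mul_prod (x : Fin N → ℤ) (α β : ℝ) :
    ∑ z ∈ steps x, pairProd z * ∏ i, (if z i = x i + 1 then β - x i else α + x i) =
      pairProd x * ∏ k ∈ range N, (α + β - k) := by
  have hrow : ∀ i (j : Fin N), ∑ a ∈ ({x i, x i + 1} : Finset ℤ),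
      (if a = x i + 1 then β - x i else α + x i) * (a : ℝ) ^ (j : ℕ) =
        (Polynomial.stepPoly α β j).eval (x i : ℝ) := by
    intro i j
    rw [sum_pair (by omega), Polynomial.eval_stepPoly]
    simp
  simp_rw [pairProd_eq_det_vandermonde]
  rw [steps, Matrix.sum_det_vandermonde_mul_prod _ (fun a : ℤ => (a : ℝ))
    (fun i a => if a = x i + 1 then β - x i else α + x i), ← Matrix.det_eval_stepPoly]
  simp_rw [hrow]

end pairProd

section transition

variable {N T S t : ℕ}

lemma mem_Xcal {f : Fin N → ℤ} :
    f ∈ Xcal N T S t ↔ (∀ i, f i ∈ secX N T S t) ∧ StrictMono f := by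
  simp [Xcal, StrictMono]

lemma mem_secX {x : ℤ} :
    x ∈ secX N T S t ↔
      0 ≤ x ∧ (t : ℤ) + S - T ≤ x ∧ x ≤ (t : ℤ) + N - 1 ∧ x ≤ (S : ℤ) + N - 1 := by
  simp [secX, and_assoc]

noncomputable def invFact (n : ℤ) : ℝ := ((n.toNat).factorial : ℝ)⁻¹

lemma add_one_mul_invFact_add_one {n : ℤ} (hn : 0 ≤ n) :
    ((n : ℝ) + 1) * invFact (n + 1) = invFact n := by
  lift n to ℕ using hn
  simp only [invFact, Int.toNat_natCast, ← Nat.cast_succ, Nat.factorial_succ]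
  push_cast
  field_simp

lemma w_eq_invFact (x : ℤ) :
    w N T S t x = invFact x * invFact (t + N - 1 - x) * invFact (S + N - 1 - x) *
      invFact (T - t - S + x) := by
  simp only [w, invFact, one_div, mul_inv]

lemma mul_w_eq_of_stay {x : ℤ} (h₁ : (t : ℤ) + 1 + S - T ≤ x) (h₂ : x ≤ (t : ℤ) + N - 1) :
    ((x : ℝ) + T - t - S) * w N T S t x = ((t : ℝ) + N - x) * w N T S (t + 1) x := by
  have hB := add_one_mul_invFact_add_one (show 0 ≤ (t : ℤ) + N - 1 - x by omega)
  have hD := add_one_mul_invFact_add_one (show 0 ≤ (T : ℤ) - (t + 1) - S + x by omega)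
  rw [w_eq_invFact, w_eq_invFact, Nat.cast_succ,
    show (t : ℤ) + 1 + N - 1 - x = t + N - 1 - x + 1 by ring,
    show (T : ℤ) - t - S + x = T - (t + 1) - S + x + 1 by ring, ← hB, ← hD]
  push_cast
  ring

lemma mul_w_eq_of_move {x : ℤ} (h₁ : 0 ≤ x) (h₂ : x + 1 ≤ (S : ℤ) + N - 1) :
    ((N : ℝ) + S - x - 1) * w N T S t x = ((x : ℝ) + 1) * w N T S (t + 1) (x + 1) := by
  have hA := add_one_mul_invFact_add_one h₁
  have hC := add_one_mul_invFact_add_one (show 0 ≤ (S : ℤ) + N - 1 - (x + 1) by omega)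
  rw [w_eq_invFact, w_eq_invFact, Nat.cast_succ,
    show (t : ℤ) + 1 + N - 1 - (x + 1) = t + N - 1 - x by ring,
    show (T : ℤ) - (t + 1) - S + (x + 1) = T - t - S + x by ring,
    show (S : ℤ) + N - 1 - x = S + N - 1 - (x + 1) + 1 by ring, ← hA, ← hC]
  push_cast
  ring

variable (N T S t) in
noncomputable def stepWeight (x y : ℤ) : ℝ :=
  if y = x + 1 then (N : ℝ) + S - x - 1 else (x : ℝ) + T - t - S

variable (N t) in
noncomputable def revStepWeight (x y : ℤ) : ℝ :=
  if y = x + 1 then (y : ℝ) else t + N - y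

lemma Ptp_of_mem_steps {X Y : Fin N → ℤ} (hY : Y ∈ steps X) :
    Ptp N T S t X Y = (pairProd Y * ∏ i, stepWeight N T S t (X i) (Y i)) /
      (poch ((T : ℝ) - t) N * pairProd X) :=
  if_pos (mem_steps.mp hY)

lemma Ptp_of_not_mem_steps {X Y : Fin N → ℤ} (hY : Y ∉ steps X) : Ptp N T S t X Y = 0 :=
  if_neg (mt mem_steps.mpr hY)

lemma stepWeight_mul_w {x y : ℤ} (hx : x ∈ secX N T S t) (hy : y ∈ secX N T S (t + 1))
    (hxy : y = x ∨ y = x + 1) :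
    stepWeight N T S t x y * w N T S t x = revStepWeight N t x y * w N T S (t + 1) y := by
  rw [mem_secX] at hx hy
  push_cast at hy
  rcases hxy with rfl | rfl
  · rw [stepWeight, revStepWeight, if_neg (by omega), if_neg (by omega)]
    exact mul_w_eq_of_stay (by omega) (by omega)
  · rw [stepWeight, revStepWeight, if_pos rfl, if_pos rfl, mul_w_eq_of_move (by omega) (by omega)]
    push_cast
    rfl

lemma stepWeight_eq_zero {x y : ℤ} (hx : x ∈ secX N T S t) (hxy : y = x ∨ y = x + 1)
    (hy : y ∉ secX N T S (t + 1)) : stepWeight N T S t x y = 0 := by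
  rw [mem_secX] at hx hy
  push_cast at hy
  rcases hxy with rfl | rfl
  · have : (y : ℝ) = t + S - T := by exact_mod_cast (show y = t + S - T by omega)
    rw [stepWeight, if_neg (by omega)]
    linarith
  · have : (x : ℝ) = S + N - 1 := by exact_mod_cast (show x = S + N - 1 by omega)
    rw [stepWeight, if_pos rfl]
    linarith

lemma revStepWeight_eq_zero {x y : ℤ} (hy : y ∈ secX N T S (t + 1)) (hxy : y = x ∨ y = x + 1)
    (hx : x ∉ secX N T S t) : revStepWeight N t x y = 0 := by
  rw [mem_secX] at hx hy
  push_cast at hy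
  rcases hxy with rfl | rfl
  · have : (y : ℝ) = t + N := by exact_mod_cast (show y = t + N by omega)
    rw [revStepWeight, if_neg (by omega)]
    linarith
  · rw [revStepWeight, if_pos rfl]
    exact_mod_cast (show x + 1 = 0 by omega)

lemma pairProd_mul_prod_eq_zero_of_mem_steps {x z : Fin N → ℤ} {s : Finset ℤ} {c : Fin N → ℝ}
    (hx : StrictMono x) (hz : z ∈ steps x) (hc : ∀ i, z i ∉ s → c i = 0)
    (hzs : ¬ ((∀ i, z i ∈ s) ∧ StrictMono z)) :
    pairProd z * ∏ i, c i = 0 := by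
  by_cases hs : ∀ i, z i ∈ s
  · have hinj : ¬ Function.Injective z := fun hinj =>
      hzs ⟨hs, (monotone_of_mem_steps hx hz).strictMono_of_injective hinj⟩
    rw [pairProd_eq_zero_of_not_injective hinj, zero_mul]
  · obtain ⟨i, hi⟩ := not_forall.mp hs
    exact mul_eq_zero_of_right _ (prod_eq_zero (mem_univ i) (hc i hi))

lemma sum_Ptp_eq_one (ht : t < T) {X : Fin N → ℤ} (hX : X ∈ Xcal N T S t) :
    ∑ Y ∈ Xcal N T S (t + 1), Ptp N T S t X Y = 1 := by
  obtain ⟨hXsec, hXmono⟩ := mem_Xcal.mp hX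
  have hpoch : poch ((T : ℝ) - t) N * pairProd X ≠ 0 :=
    (mul_pos (poch_pos (by simpa using ht) N) (pairProd_pos hXmono)).ne'
  have hid : ∑ Y ∈ steps X, pairProd Y * ∏ i, stepWeight N T S t (X i) (Y i) =
      pairProd X * poch ((T : ℝ) - t) N := by
    calc ∑ Y ∈ steps X, pairProd Y * ∏ i, stepWeight N T S t (X i) (Y i)
        = ∑ Y ∈ steps X, pairProd Y * ∏ i,
            (if Y i = X i + 1 then ((N : ℝ) + S - 1) - X i else ((T : ℝ) - t - S) + X i) := by
          refine sum_congr rfl fun Y _ => congrArg _ (prod_congr rfl fun i _ => ?_)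
          rw [stepWeight]
          split_ifs <;> ring
      _ = pairProd X * poch ((T : ℝ) - t) N := by
          rw [sum_steps_pairProd_mul_prod, poch_eq_prod_range_reflect]
          exact congrArg _ (prod_congr rfl fun k _ => by ring)
  calc ∑ Y ∈ Xcal N T S (t + 1), Ptp N T S t X Y
      = ∑ Y ∈ steps X, (pairProd Y * ∏ i, stepWeight N T S t (X i) (Y i)) /
          (poch ((T : ℝ) - t) N * pairProd X) := by
        refine sum_congr_of_eq_on_inter (fun Y _ hY => Ptp_of_not_mem_steps hY)
          (fun Y hY hY' => ?_) (fun Y _ hY => Ptp_of_mem_steps hY)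
        rw [pairProd_mul_prod_eq_zero_of_mem_steps hXmono hY
          (fun i => stepWeight_eq_zero (hXsec i) (mem_steps.mp hY i))
          (mt mem_Xcal.mpr hY'), zero_div]
    _ = 1 := by rw [← sum_div, hid, mul_comm, div_self hpoch]

lemma sum_Ptp_mul_rho (ht : t < T) (Z : ℝ) {Y : Fin N → ℤ} (hY : Y ∈ Xcal N T S (t + 1)) :
    ∑ X ∈ Xcal N T S t, Ptp N T S t X Y * rho N T S t Z X =
      rho N T S (t + 1) (Z * poch ((t : ℝ) + 1) N / poch ((T : ℝ) - t) N) Y := by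
  obtain ⟨hYsec, hYmono⟩ := mem_Xcal.mp hY
  set x : Fin N → ℤ := fun i => Y i - 1
  have hx : StrictMono x := fun i j hij => by simpa [x] using hYmono hij
  have hsteps : ∀ X, X ∈ steps x ↔ Y ∈ steps X := fun X => by
    simp only [mem_steps, x]
    exact forall_congr' fun i => by omega
  have hid : ∑ X ∈ steps x, pairProd X * ∏ i, revStepWeight N t (X i) (Y i) =
      pairProd Y * poch ((t : ℝ) + 1) N := by
    calc ∑ X ∈ steps x, pairProd X * ∏ i, revStepWeight N t (X i) (Y i)
        = ∑ X ∈ steps x, pairProd X * ∏ i,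
            (if X i = x i + 1 then ((t : ℝ) + N - 1) - x i else 1 + x i) := by
          refine sum_congr rfl fun X hX => congrArg _ (prod_congr rfl fun i _ => ?_)
          simp only [revStepWeight, x]
          rcases mem_steps.mp ((hsteps X).mp hX) i with h | h
          · rw [if_neg (by omega), if_pos (by omega), h]
            push_cast
            ring
          · rw [if_pos h, if_neg (by omega), h]
            push_cast
            ring
      _ = pairProd Y * poch ((t : ℝ) + 1) N := by
          rw [sum_steps_pairProd_mul_prod, pairProd_sub_const, poch_eq_prod_range_reflect]
          exact congrArg _ (prod_congr rfl fun k _ => by ring)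
  set K : ℝ := Z / poch ((T : ℝ) - t) N * pairProd Y * ∏ i, w N T S (t + 1) (Y i)
  have hterm : ∀ X ∈ Xcal N T S t, Y ∈ steps X → Ptp N T S t X Y * rho N T S t Z X =
      K * (pairProd X * ∏ i, revStepWeight N t (X i) (Y i)) := by
    intro X hX hYX
    obtain ⟨hXsec, hXmono⟩ := mem_Xcal.mp hX
    have hw : (∏ i, stepWeight N T S t (X i) (Y i)) * ∏ i, w N T S t (X i) =
        (∏ i, revStepWeight N t (X i) (Y i)) * ∏ i, w N T S (t + 1) (Y i) := by
      rw [← prod_mul_distrib, ← prod_mul_distrib]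
      exact prod_congr rfl fun i _ => stepWeight_mul_w (hXsec i) (hYsec i) (mem_steps.mp hYX i)
    have hX0 := (pairProd_pos hXmono).ne'
    have hP := (poch_pos (a := (T : ℝ) - t) (by simpa using ht) N).ne'
    rw [Ptp_of_mem_steps hYX, rho]
    simp only [K]
    field_simp
    linear_combination (Z * pairProd Y) * hw
  calc ∑ X ∈ Xcal N T S t, Ptp N T S t X Y * rho N T S t Z X
      = ∑ X ∈ steps x, K * (pairProd X * ∏ i, revStepWeight N t (X i) (Y i)) := by
        refine sum_congr_of_eq_on_inter (fun X _ hX => ?_) (fun X hX hX' => ?_)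
          (fun X hX hX' => hterm X hX ((hsteps X).mp hX'))
        · rw [Ptp_of_not_mem_steps (mt (hsteps X).mpr hX), zero_mul]
        · rw [pairProd_mul_prod_eq_zero_of_mem_steps hx hX
            (fun i => revStepWeight_eq_zero (hYsec i) (mem_steps.mp ((hsteps X).mp hX) i))
            (mt mem_Xcal.mpr hX'), mul_zero]
    _ = rho N T S (t + 1) (Z * poch ((t : ℝ) + 1) N / poch ((T : ℝ) - t) N) Y := by
        rw [← mul_sum, hid, rho]
        ring

lemma eq_of_sum_rho_eq_one {s : Finset (Fin N → ℤ)} {Z Z' : ℝ}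
    (h : ∑ Y ∈ s, rho N T S t Z Y = 1) (h' : ∑ Y ∈ s, rho N T S t Z' Y = 1) : Z = Z' := by
  simp only [rho, mul_assoc, ← mul_sum] at h h'
  exact mul_right_cancel₀ (right_ne_zero_of_mul_eq_one h) (h.trans h'.symm)

end transition

theorem Ptp_preserves_rho_general (N T S t : ℕ) (ht : t < T)
    (Z₁ Z₂ : ℝ)
    (h₁ : ∑ X ∈ Xcal N T S t, rho N T S t Z₁ X = 1)
    (h₂ : ∑ Y ∈ Xcal N T S (t + 1), rho N T S (t + 1) Z₂ Y = 1) :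
    ∀ Y ∈ Xcal N T S (t + 1),
      rho N T S (t + 1) Z₂ Y = ∑ X ∈ Xcal N T S t, Ptp N T S t X Y * rho N T S t Z₁ X := by
  have hZ : ∑ Y ∈ Xcal N T S (t + 1),
      rho N T S (t + 1) (Z₁ * poch ((t : ℝ) + 1) N / poch ((T : ℝ) - t) N) Y = 1 := by
    rw [← sum_congr rfl fun Y hY => sum_Ptp_mul_rho ht Z₁ hY, sum_comm, ← h₁]
    exact sum_congr rfl fun X hX => by rw [← sum_mul, sum_Ptp_eq_one ht hX, one_mul]
  intro Y hY
  rw [eq_of_sum_rho_eq_one h₂ hZ, sum_Ptp_mul_rho ht Z₁ hY]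

/-- P^{S,t}_{t+} preserves the (normalized) measures ρ_{S,t}. -/
theorem Ptp_preserves_rho (N T S t : ℕ) (hN : 1 ≤ N) (hS : S ≤ T) (ht : t < T)
    (Z₁ Z₂ : ℝ)
    (h₁ : ∑ X ∈ Xcal N T S t, rho N T S t Z₁ X = 1)
    (h₂ : ∑ Y ∈ Xcal N T S (t + 1), rho N T S (t + 1) Z₂ Y = 1) :
    ∀ Y ∈ Xcal N T S (t + 1),
      rho N T S (t + 1) Z₂ Y = ∑ X ∈ Xcal N T S t, Ptp N T S t X Y * rho N T S t Z₁ X :=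
  Ptp_preserves_rho_general N T S t ht Z₁ Z₂ h₁ h₂
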